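/- arXiv:1809.06840 — 3 statements merged into one kernel-verified Lean document; each statement's English description precedes it below -/
import Mathlib

section
/- Let ρ : ℝ^d → ℝ^d be a C^k-diffeomorphism (k ≥ 1) with M ≤ |det(Dρ)| and |D^i ρ| ≤ N for i = 1,...,k. Then there exist positive constants M' = M'(N,d) and N' = N'(N,M,d,k) such that the inverse g = ρ^{-1} satisfies M' ≤ |det(Dg)| and |D^i g| ≤ N' for i = 1,...,k. -/
/-!
Write `g = ρ⁻¹`. Differentiating `ρ ∘ g = id` gives `Dg = (Dρ ∘ g)⁻¹`, so `det Dg = 1 / (det Dρ ∘ g)`,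
and `|det Dρ|` is bounded above on the compact ball `‖A‖ ≤ N`. For the higher derivatives, the
values of `Dρ` lie in the compact set `{A | ‖A‖ ≤ N, M ≤ |det A|}` of invertible maps, on which
all derivatives of inversion up to order `k` are bounded. Applying the Faà di Bruno bound to
`Dg = inv ∘ Dρ ∘ g` then bounds `D^(m+1) g` by `D^1 g, …, D^m g`, and induction on `m` finishes.
-/

open Function Nat Set

section Inverse

variable {𝕜 : Type*} [NontriviallyNormedField 𝕜] {E : Type*} [NormedAddCommGroup E]
  [NormedSpace 𝕜 E]

theorem ContinuousLinearMap.det_ringInverse {A : E →L[𝕜] E} (hA : IsUnit A) :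
    (Ring.inverse A).det = A.det⁻¹ := by
  obtain ⟨u, rfl⟩ := hA
  refine eq_inv_of_mul_eq_one_left ?_
  rw [Ring.inverse_unit, ← LinearMap.det_comp]
  exact (congrArg LinearMap.det (congrArg ContinuousLinearMap.toLinearMap u.inv_mul)).trans
    LinearMap.det_id

theorem fderiv_rightInverse_eq_ringInverse {ρ g : E → E} (hρg : RightInverse g ρ)
    {y : E} (hρ : DifferentiableAt 𝕜 ρ (g y)) (hg : DifferentiableAt 𝕜 g y)
    (hu : IsUnit (fderiv 𝕜 ρ (g y))) :
    fderiv 𝕜 g y = Ring.inverse (fderiv 𝕜 ρ (g y)) := by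
  have h : fderiv 𝕜 ρ (g y) * fderiv 𝕜 g y = 1 := by
    rw [ContinuousLinearMap.mul_def, ← fderiv_comp y hρ hg, hρg.comp_eq_id, fderiv_id]
    rfl
  rw [← Ring.inverse_mul_cancel_left _ (fderiv 𝕜 g y) hu, h, mul_one]

end Inverse

section FiniteDimensional

variable {E : Type*} [NormedAddCommGroup E] [NormedSpace ℝ E] [FiniteDimensional ℝ E]

theorem ContinuousLinearMap.isUnit_of_det_ne_zero {A : E →L[ℝ] E} (h : A.det ≠ 0) : IsUnit A :=
  isUnit_iff_isUnit_toLinearMap.2 ((LinearMap.isUnit_iff_isUnit_det _).2 h.isUnit)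

theorem exists_abs_det_le (N : ℝ) :
    ∃ D, 0 < D ∧ ∀ A : E →L[ℝ] E, ‖A‖ ≤ N → |A.det| ≤ D := by
  obtain ⟨D, hD⟩ := (isCompact_closedBall (0 : E →L[ℝ] E) N).exists_bound_of_continuousOn
    ContinuousLinearMap.continuous_det.continuousOn
  exact ⟨max D 1, by positivity, fun A hA =>
    (hD A (mem_closedBall_zero_iff.2 hA)).trans (le_max_left _ _)⟩

theorem exists_norm_iteratedFDerivWithin_ringInverse_le (k : ℕ) {M : ℝ} (hM : 0 < M) (N : ℝ) :
    ∃ C, ∀ A : E →L[ℝ] E, ‖A‖ ≤ N → M ≤ |A.det| → ∀ i ≤ k,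
      ‖iteratedFDerivWithin ℝ i Ring.inverse {B | IsUnit B} A‖ ≤ C := by
  set K := {A : E →L[ℝ] E | ‖A‖ ≤ N ∧ M ≤ |A.det|}
  have hK : IsCompact K :=
    (isCompact_closedBall 0 N).of_isClosed_subset
      ((isClosed_le continuous_norm continuous_const).inter
        (isClosed_le continuous_const ContinuousLinearMap.continuous_det.abs))
      fun A hA => mem_closedBall_zero_iff.2 hA.1
  have hKunit : K ⊆ {B | IsUnit B} := fun A hA =>
    ContinuousLinearMap.isUnit_of_det_ne_zero (abs_pos.1 (hM.trans_le hA.2))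
  have hinv : ContDiffOn ℝ k Ring.inverse {B : E →L[ℝ] E | IsUnit B} :=
    analyticOnNhd_inverse.contDiffOn Units.isOpen.uniqueDiffOn
  obtain ⟨C, hC⟩ := hK.exists_bound_of_continuousOn (f := fun A =>
      ∑ i ∈ Finset.range (k + 1), ‖iteratedFDerivWithin ℝ i Ring.inverse {B | IsUnit B} A‖)
    (continuousOn_finsetSum _ fun i hi =>
      ((hinv.continuousOn_iteratedFDerivWithin (by exact_mod_cast Finset.mem_range_succ_iff.1 hi)
        Units.isOpen.uniqueDiffOn).norm).mono hKunit)
  refine ⟨C, fun A hAN hAM i hi => le_trans ?_ ((le_abs_self _).trans (hC A ⟨hAN, hAM⟩))⟩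
  exact Finset.single_le_sum (f := fun i => ‖iteratedFDerivWithin ℝ i Ring.inverse _ A‖)
    (fun _ _ => norm_nonneg _) (Finset.mem_range_succ_iff.2 hi)

end FiniteDimensional

/-- The bound on `‖D^j g‖`, `1 ≤ j ≤ m`, obtained by iterating
`norm_iteratedFDeriv_succ_rightInverse_le`. -/
noncomputable def inverseDerivBound (N C : ℝ) : ℕ → ℝ
  | 0 => 1
  | m + 1 => max (inverseDerivBound N C m)
      (m ! * C * max 1 (m ! * N * inverseDerivBound N C m ^ m) ^ m)

theorem one_le_inverseDerivBound (N C : ℝ) (m : ℕ) : 1 ≤ inverseDerivBound N C m := by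
  induction m with
  | zero => exact le_rfl
  | succ m ih => exact ih.trans (le_max_left _ _)

section RightInverse

variable {𝕜 : Type*} [NontriviallyNormedField 𝕜] {E : Type*} [NormedAddCommGroup E]
  [NormedSpace 𝕜 E] [CompleteSpace E] {ρ g : E → E} {k : ℕ} {N C : ℝ}
  (hρ : ContDiff 𝕜 k ρ) (hg : ContDiff 𝕜 k g) (hρg : RightInverse g ρ)
  (hunit : ∀ x, IsUnit (fderiv 𝕜 ρ x))
  (hρN : ∀ x i, 1 ≤ i → i ≤ k → ‖iteratedFDeriv 𝕜 i ρ x‖ ≤ N)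
  (hC : ∀ x, ∀ i ≤ k, ‖iteratedFDerivWithin 𝕜 i Ring.inverse {A | IsUnit A} (fderiv 𝕜 ρ x)‖ ≤ C)
include hρ hg hρg hunit hρN hC

theorem norm_iteratedFDeriv_succ_rightInverse_le {m : ℕ} (hm : m < k) {B : ℝ} (hB : 1 ≤ B)
    (hgB : ∀ y j, 1 ≤ j → j ≤ m → ‖iteratedFDeriv 𝕜 j g y‖ ≤ B) (y : E) :
    ‖iteratedFDeriv 𝕜 (m + 1) g y‖ ≤ m ! * C * max 1 (m ! * N * B ^ m) ^ m := by
  have hk : (k : WithTop ℕ∞) ≠ 0 := by exact_mod_cast (by omega : k ≠ 0)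
  have hN : 0 ≤ N := (norm_nonneg _).trans (hρN 0 1 le_rfl (by omega))
  have hDρ : ContDiff 𝕜 (k - 1 : ℕ) (fderiv 𝕜 ρ) := hρ.fderiv_right (by norm_cast; omega)
  have hDρg : ContDiff 𝕜 (k - 1 : ℕ) (fderiv 𝕜 ρ ∘ g) := hDρ.comp (hg.of_le (by norm_cast; omega))
  set L := max 1 (m ! * N * B ^ m)
  have hDρgL : ∀ i, 1 ≤ i → i ≤ m → ‖iteratedFDeriv 𝕜 i (fderiv 𝕜 ρ ∘ g) y‖ ≤ L ^ i := by
    intro i hi1 hi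
    calc ‖iteratedFDeriv 𝕜 i (fderiv 𝕜 ρ ∘ g) y‖ ≤ i ! * N * B ^ i :=
          norm_iteratedFDeriv_comp_le hDρ (hg.of_le (by norm_cast; omega)) (by norm_cast; omega) y
            (fun j hj => by rw [norm_iteratedFDeriv_fderiv]; exact hρN _ _ (by omega) (by omega))
            (fun j hj1 hj => (hgB y j hj1 (hj.trans hi)).trans (le_self_pow₀ hB (by omega)))
      _ ≤ m ! * N * B ^ m := by gcongr
      _ ≤ L ^ i := (le_max_right _ _).trans (le_self_pow₀ (le_max_left _ _) (by omega))
  have hDg : fderiv 𝕜 g = Ring.inverse ∘ (fderiv 𝕜 ρ ∘ g) := funext fun y =>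
    fderiv_rightInverse_eq_ringInverse hρg (hρ.differentiable hk _) (hg.differentiable hk _)
      (hunit _)
  rw [← norm_iteratedFDeriv_fderiv, hDg]
  have hinv : ContDiffOn 𝕜 (k - 1 : ℕ) Ring.inverse {A : E →L[𝕜] E | IsUnit A} :=
    analyticOnNhd_inverse.contDiffOn Units.isOpen.uniqueDiffOn
  have hrange : range (fderiv 𝕜 ρ ∘ g) ⊆ {A | IsUnit A} := range_subset_iff.2 fun y => hunit (g y)
  have hn : (m : WithTop ℕ∞) ≤ (k - 1 : ℕ) := by norm_cast; omega
  have hCy : ∀ i ≤ m,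
      ‖iteratedFDerivWithin 𝕜 i Ring.inverse {A | IsUnit A} ((fderiv 𝕜 ρ ∘ g) y)‖ ≤ C :=
    fun i hi => hC (g y) i (by omega)
  exact norm_iteratedFDeriv_comp_le' hrange Units.isOpen.uniqueDiffOn hinv hDρg hn y hCy hDρgL

theorem norm_iteratedFDeriv_rightInverse_le {m : ℕ} (hm : m ≤ k) (y : E) {j : ℕ} (hj1 : 1 ≤ j)
    (hj : j ≤ m) : ‖iteratedFDeriv 𝕜 j g y‖ ≤ inverseDerivBound N C m := by
  induction m generalizing y j with
  | zero => omega
  | succ m ih =>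
    rcases Nat.lt_or_ge j (m + 1) with hjm | hjm
    · exact (ih (by omega) y hj1 (by omega)).trans (le_max_left _ _)
    · obtain rfl : j = m + 1 := by omega
      exact (norm_iteratedFDeriv_succ_rightInverse_le hρ hg hρg hunit hρN hC hm
        (one_le_inverseDerivBound N C m) (fun y j hj1 hj => ih (by omega) y hj1 hj) y).trans
        (le_max_right _ _)

end RightInverse

theorem inverse_diffeo_bounds_general (d k : ℕ) (hk : 1 ≤ k) (M N : ℝ) (hM : 0 < M) :
    ∃ M' N' : ℝ, 0 < M' ∧ 0 < N' ∧
      ∀ ρ : (Fin d → ℝ) → (Fin d → ℝ),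
        ContDiff ℝ k ρ → Function.Bijective ρ → ContDiff ℝ k (Function.invFun ρ) →
        (∀ x, M ≤ |(fderiv ℝ ρ x).det|) →
        (∀ x, ∀ i : ℕ, 1 ≤ i → i ≤ k → ‖iteratedFDeriv ℝ i ρ x‖ ≤ N) →
        (∀ x, M' ≤ |(fderiv ℝ (Function.invFun ρ) x).det|) ∧
        (∀ x, ∀ i : ℕ, 1 ≤ i → i ≤ k → ‖iteratedFDeriv ℝ i (Function.invFun ρ) x‖ ≤ N') := by
  obtain ⟨D, hD0, hD⟩ := exists_abs_det_le (E := Fin d → ℝ) N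
  obtain ⟨C, hC⟩ := exists_norm_iteratedFDerivWithin_ringInverse_le (E := Fin d → ℝ) k hM N
  refine ⟨D⁻¹, inverseDerivBound N C k, inv_pos.2 hD0,
    one_pos.trans_le (one_le_inverseDerivBound N C k), fun ρ hρ hbij hg hdet hρN => ?_⟩
  have hρg : RightInverse (invFun ρ) ρ := rightInverse_invFun hbij.2
  have hnorm (x) : ‖fderiv ℝ ρ x‖ ≤ N := by
    simpa only [norm_iteratedFDeriv_one] using hρN x 1 le_rfl hk
  have hdet_pos (x) : 0 < |(fderiv ℝ ρ x).det| := hM.trans_le (hdet x)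
  have hunit (x) : IsUnit (fderiv ℝ ρ x) :=
    ContinuousLinearMap.isUnit_of_det_ne_zero (abs_pos.1 (hdet_pos x))
  have hk0 : (k : WithTop ℕ∞) ≠ 0 := by exact_mod_cast (by omega : k ≠ 0)
  refine ⟨fun y => ?_, fun y i hi1 hi =>
    norm_iteratedFDeriv_rightInverse_le hρ hg hρg hunit hρN
      (fun x i hi => hC _ (hnorm x) (hdet x) i hi) le_rfl y hi1 hi⟩
  rw [fderiv_rightInverse_eq_ringInverse hρg (hρ.differentiable hk0 _) (hg.differentiable hk0 _)
    (hunit _), ContinuousLinearMap.det_ringInverse (hunit _), abs_inv]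
  exact inv_anti₀ (hdet_pos _) (hD _ (hnorm _))

/-- If `ρ` is a `C^k`-diffeomorphism of `ℝ^d` with `M ≤ |det Dρ|` and `|D^i ρ| ≤ N` for
`i = 1,…,k`, then its inverse `g = ρ⁻¹` satisfies `M' ≤ |det Dg|` and `|D^i g| ≤ N'`
with constants `M' = M'(N,d)` and `N' = N'(N,M,d,k)`. -/
theorem inverse_diffeo_bounds (d k : ℕ) (hk : 1 ≤ k) (M N : ℝ) (hM : 0 < M) (hN : 0 < N) :
    ∃ M' N' : ℝ, 0 < M' ∧ 0 < N' ∧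
      ∀ ρ : (Fin d → ℝ) → (Fin d → ℝ),
        ContDiff ℝ k ρ → Function.Bijective ρ → ContDiff ℝ k (Function.invFun ρ) →
        (∀ x, M ≤ |(fderiv ℝ ρ x).det|) →
        (∀ x, ∀ i : ℕ, 1 ≤ i → i ≤ k → ‖iteratedFDeriv ℝ i ρ x‖ ≤ N) →
        (∀ x, M' ≤ |(fderiv ℝ (Function.invFun ρ) x).det|) ∧
        (∀ x, ∀ i : ℕ, 1 ≤ i → i ≤ k → ‖iteratedFDeriv ℝ i (Function.invFun ρ) x‖ ≤ N') :=
  inverse_diffeo_bounds_general d k hk M N hM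
end

section
/- Let ρ: X → X, v: X → ℝ, and define Iv(x) = v(ρ(x)) − v(x). Then for p = 2^k (integer k ≥ 1), |v(x)|^{p−2} v(x) · Iv(x) = (1/p) I(v^p)(x) − ∑_{j=1}^{k} 2^{−j} |v(x)|^{p−2^j} (I(v^{2^{j−1}})(x))², and in particular |v|^{p−2} v · Iv ≤ (1/p) I(v^p). -/
private lemma I_power_key (a b : ℝ) (k : ℕ) (hk : 1 ≤ k) :
    |b| ^ (2 ^ k - 2) * b * (a - b)
      = (1 / (2 ^ k : ℝ)) * (a ^ (2 ^ k) - b ^ (2 ^ k))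
        - ∑ j ∈ Finset.Icc 1 k, (1 / (2 ^ j : ℝ)) * |b| ^ (2 ^ k - 2 ^ j) *
            (a ^ (2 ^ (j - 1)) - b ^ (2 ^ (j - 1))) ^ 2 := by
  induction k, hk using Nat.le_induction with
  | base =>
    simp [Finset.Icc_self]
    ring
  | succ k hk ih =>
    have h2 : (2 : ℕ) ≤ 2 ^ k := by
      calc (2:ℕ) = 2 ^ 1 := rfl
      _ ≤ 2 ^ k := Nat.pow_le_pow_right (by norm_num) hk
    have hE : 2 ^ (k + 1) - 2 = 2 ^ k + (2 ^ k - 2) := by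
      rw [pow_succ]; omega
    have habs : |b| ^ (2 ^ k) = b ^ (2 ^ k) :=
      Even.pow_abs (Nat.even_pow.mpr ⟨even_two, by omega⟩) b
    have hsum : ∑ j ∈ Finset.Icc 1 (k + 1), (1 / (2 ^ j : ℝ)) * |b| ^ (2 ^ (k+1) - 2 ^ j) *
            (a ^ (2 ^ (j - 1)) - b ^ (2 ^ (j - 1))) ^ 2
        = (∑ j ∈ Finset.Icc 1 k, b ^ (2^k) * ((1 / (2 ^ j : ℝ)) * |b| ^ (2 ^ k - 2 ^ j) *
            (a ^ (2 ^ (j - 1)) - b ^ (2 ^ (j - 1))) ^ 2))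
          + (1 / (2 ^ (k+1) : ℝ)) * (a ^ (2 ^ k) - b ^ (2 ^ k)) ^ 2 := by
      rw [Finset.sum_Icc_succ_top (by omega)]
      congr 1
      · apply Finset.sum_congr rfl
        intro j hj
        have hjk : j ≤ k := (Finset.mem_Icc.mp hj).2
        have hje : 2 ^ (k+1) - 2 ^ j = 2 ^ k + (2 ^ k - 2 ^ j) := by
          have : 2 ^ j ≤ 2 ^ k := Nat.pow_le_pow_right (by norm_num) hjk
          rw [pow_succ]; omega
        rw [hje, pow_add, habs]; ring
      · simp
    have hlhs : |b| ^ (2 ^ (k+1) - 2) * b * (a - b)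
        = b ^ (2 ^ k) * (|b| ^ (2 ^ k - 2) * b * (a - b)) := by
      rw [hE, pow_add, habs]; ring
    rw [hlhs, ih, hsum]
    have hA : a ^ (2 ^ (k+1)) = (a ^ (2 ^ k)) ^ 2 := by
      rw [← pow_mul, pow_succ]
    have hB : b ^ (2 ^ (k+1)) = (b ^ (2 ^ k)) ^ 2 := by
      rw [← pow_mul, pow_succ]
    rw [hA, hB, mul_sub, Finset.mul_sum]
    have key : b ^ (2^k) * (1/(2:ℝ)^k * (a ^ (2^k) - b ^ (2^k)))
        = 1/(2:ℝ)^(k+1) * ((a ^ (2^k))^2 - (b ^ (2^k))^2)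
          - 1/(2:ℝ)^(k+1) * (a ^ (2^k) - b ^ (2^k))^2 := by
      have hp : (2:ℝ)^(k+1) = 2 * 2^k := by ring
      field_simp [hp]
      ring
    linarith [key]

/-- For `p = 2^k`, the recursion identity
`|v|^{p−2} v Iv = (1/p) I(v^p) − ∑_{j=1}^k 2^{−j} |v|^{p−2^j} (I(v^{2^{j−1}}))²`
and, in particular, `|v|^{p−2} v Iv ≤ (1/p) I(v^p)`, where `Iv(x) = v(ρ(x)) − v(x)`. -/
theorem I_power_identity {X : Type*} (ρ : X → X) (v : X → ℝ) (x : X)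
    (k : ℕ) (hk : 1 ≤ k) :
    (|v x| ^ (2 ^ k - 2) * v x * (v (ρ x) - v x)
        = (1 / (2 ^ k : ℝ)) * ((v (ρ x)) ^ (2 ^ k) - (v x) ^ (2 ^ k))
          - ∑ j ∈ Finset.Icc 1 k, (1 / (2 ^ j : ℝ)) * |v x| ^ (2 ^ k - 2 ^ j) *
              ((v (ρ x)) ^ (2 ^ (j - 1)) - (v x) ^ (2 ^ (j - 1))) ^ 2) ∧
      |v x| ^ (2 ^ k - 2) * v x * (v (ρ x) - v x)
        ≤ (1 / (2 ^ k : ℝ)) * ((v (ρ x)) ^ (2 ^ k) - (v x) ^ (2 ^ k)) := by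
  have h := I_power_key (v (ρ x)) (v x) k hk
  refine ⟨h, ?_⟩
  rw [h]
  have hnn : 0 ≤ ∑ j ∈ Finset.Icc 1 k, (1 / (2 ^ j : ℝ)) * |v x| ^ (2 ^ k - 2 ^ j) *
      ((v (ρ x)) ^ (2 ^ (j - 1)) - (v x) ^ (2 ^ (j - 1))) ^ 2 := by
    apply Finset.sum_nonneg
    intro j _
    positivity
  linarith
end

section
/- Let a : ℝ^d → ℝ^{d×d} take values in symmetric nonnegative-definite matrices with all second-order derivatives of a bounded by a constant L. Then for any symmetric matrix V ∈ ℝ^{d×d} and any l ∈ {1,...,d}, |D_l a^{ij}(x) V^{ij}|² ≤ N a^{ij}(x) V^{ik} V^{jk} for all x, where N depends only on L and d (summation over repeated indices). -/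
/-!
Restricted to a line, the quadratic form `y ↦ uᵀ a(y) u` of a unit vector `u` is a nonnegative
function `φ` of one variable whose derivative is Lipschitz. Taylor's formula then gives
`0 ≤ φ(t + h) ≤ φ(t) + φ'(t) h + M h²` for every `h`, and a nonnegative quadratic polynomial has
nonpositive discriminant: `φ'(t)² ≤ 4 M φ(t)`. For a symmetric `V` with orthonormal eigenvectors
`u_k` and eigenvalues `λ_k`, the two sides of the estimate are `∑ λ_k (u_kᵀ ∂a u_k)` and
`∑ λ_k² (u_kᵀ a u_k)`, so Cauchy–Schwarz over `k` reduces the matrix estimate to the scalar one.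
-/

open Matrix

theorem abs_sub_sub_deriv_mul_le_of_lipschitz_deriv {φ φ' : ℝ → ℝ} {M : ℝ}
    (hφ : ∀ t, HasDerivAt φ (φ' t) t) (hφ' : ∀ s t, |φ' s - φ' t| ≤ M * |s - t|) (t h : ℝ) :
    |φ (t + h) - φ t - φ' t * h| ≤ M * h ^ 2 := by
  have hg : ∀ s, HasDerivAt (fun s => φ s - φ' t * s) (φ' s - φ' t) s := fun s => by
    simpa using (hφ s).fun_sub ((hasDerivAt_id' s).const_mul (φ' t))
  have hg' : ∀ s ∈ Set.uIcc t (t + h), ‖φ' s - φ' t‖ ≤ M * |h| := fun s hs => by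
    have hM : 0 ≤ M := by simpa using (abs_nonneg _).trans (hφ' (t + 1) t)
    have : |s - t| ≤ |h| := by simpa using Set.abs_sub_left_of_mem_uIcc hs
    exact (hφ' s t).trans (mul_le_mul_of_nonneg_left this hM)
  have := Convex.norm_image_sub_le_of_norm_hasDerivWithin_le
    (fun s _ => (hg s).hasDerivWithinAt) hg' (convex_uIcc _ _) Set.left_mem_uIcc Set.right_mem_uIcc
  calc |φ (t + h) - φ t - φ' t * h| = ‖φ (t + h) - φ' t * (t + h) - (φ t - φ' t * t)‖ := by
        rw [Real.norm_eq_abs]; ring_nf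
    _ ≤ M * |h| * ‖t + h - t‖ := this
    _ = M * h ^ 2 := by rw [add_sub_cancel_left, Real.norm_eq_abs, mul_assoc, ← sq, sq_abs]

theorem sq_deriv_le_of_nonneg_of_lipschitz_deriv {φ φ' : ℝ → ℝ} {M : ℝ}
    (hφ : ∀ t, HasDerivAt φ (φ' t) t) (hφ_nonneg : ∀ t, 0 ≤ φ t)
    (hφ' : ∀ s t, |φ' s - φ' t| ≤ M * |s - t|) (t : ℝ) :
    φ' t ^ 2 ≤ 4 * M * φ t := by
  have hquad : ∀ h, 0 ≤ M * (h * h) + φ' t * h + φ t := fun h => by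
    have := (abs_le.mp (abs_sub_sub_deriv_mul_le_of_lipschitz_deriv hφ hφ' t h)).2
    nlinarith [hφ_nonneg (t + h)]
  have := discrim_le_zero hquad
  rw [discrim] at this
  linarith

section NormedSpace

variable {E F : Type*} [NormedAddCommGroup E] [NormedSpace ℝ E] [NormedAddCommGroup F]
  [NormedSpace ℝ F]

theorem norm_fderiv_sub_le_of_norm_iteratedFDeriv_two_le {f : E → F} {C : ℝ}
    (hf : ContDiff ℝ 2 f) (hC : ∀ x, ‖iteratedFDeriv ℝ 2 f x‖ ≤ C) (x y : E) :
    ‖fderiv ℝ f x - fderiv ℝ f y‖ ≤ C * ‖x - y‖ := by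
  have hdiff : Differentiable ℝ (fderiv ℝ f) :=
    (hf.fderiv_right (m := 1) le_rfl).differentiable one_ne_zero
  refine Convex.norm_image_sub_le_of_norm_fderiv_le (fun z _ => hdiff z) (fun z _ => ?_)
    convex_univ (Set.mem_univ y) (Set.mem_univ x)
  rw [← norm_iteratedFDeriv_one, norm_iteratedFDeriv_fderiv]
  exact hC z

theorem sq_fderiv_apply_le_of_nonneg {f : E → ℝ} {C : ℝ} (hf : ContDiff ℝ 2 f)
    (hf_nonneg : ∀ x, 0 ≤ f x) (hC : ∀ x, ‖iteratedFDeriv ℝ 2 f x‖ ≤ C) (x v : E) :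
    fderiv ℝ f x v ^ 2 ≤ 4 * (C * ‖v‖ ^ 2) * f x := by
  have hline : ∀ t : ℝ, HasDerivAt (fun t : ℝ => f (x + t • v)) (fderiv ℝ f (x + t • v) v) t :=
    fun t => by
      have hv : HasDerivAt (fun t : ℝ => x + t • v) v t := by
        simpa using ((hasDerivAt_id t).smul_const v).const_add x
      exact ((hf.differentiable two_ne_zero) _).hasFDerivAt.comp_hasDerivAt t hv
  have hlip : ∀ s t : ℝ, |fderiv ℝ f (x + s • v) v - fderiv ℝ f (x + t • v) v|
      ≤ C * ‖v‖ ^ 2 * |s - t| := fun s t => by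
    calc |fderiv ℝ f (x + s • v) v - fderiv ℝ f (x + t • v) v|
        = ‖(fderiv ℝ f (x + s • v) - fderiv ℝ f (x + t • v)) v‖ := rfl
      _ ≤ C * ‖x + s • v - (x + t • v)‖ * ‖v‖ :=
        ((fderiv ℝ f (x + s • v) - fderiv ℝ f (x + t • v)).le_opNorm v).trans
          (mul_le_mul_of_nonneg_right
            (norm_fderiv_sub_le_of_norm_iteratedFDeriv_two_le hf hC _ _) (norm_nonneg v))
      _ = C * ‖v‖ ^ 2 * |s - t| := by
        rw [add_sub_add_left_eq_sub, ← sub_smul, norm_smul, Real.norm_eq_abs]; ring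
  simpa using sq_deriv_le_of_nonneg_of_lipschitz_deriv hline (fun t => hf_nonneg _) hlip 0

end NormedSpace

section QuadraticForm

variable {n : Type*} [Fintype n]

theorem Matrix.dotProduct_mulVec_self_eq_sum (M : Matrix n n ℝ) (u : n → ℝ) :
    u ⬝ᵥ M *ᵥ u = ∑ i, ∑ j, (u i * u j) • M i j := by
  simp only [dotProduct, mulVec, Finset.mul_sum, smul_eq_mul]
  exact Finset.sum_congr rfl fun i _ => Finset.sum_congr rfl fun j _ => by ring

theorem sq_sum_abs_le_card_mul_dotProduct_self (u : n → ℝ) :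
    (∑ i, |u i|) ^ 2 ≤ Fintype.card n * (u ⬝ᵥ u) := by
  simpa [dotProduct, ← sq] using sq_sum_le_card_mul_sum_sq (s := Finset.univ) (f := fun i => |u i|)

variable {E : Type*} [NormedAddCommGroup E] [NormedSpace ℝ E] {a : E → Matrix n n ℝ}
  (ha : ∀ i j, ContDiff ℝ 2 fun x => a x i j) (u : n → ℝ)
include ha

theorem contDiff_dotProduct_mulVec_self : ContDiff ℝ 2 fun x => u ⬝ᵥ a x *ᵥ u := by
  simp only [dotProduct_mulVec_self_eq_sum]
  fun_prop

theorem fderiv_dotProduct_mulVec_self_apply (x v : E) :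
    fderiv ℝ (fun y => u ⬝ᵥ a y *ᵥ u) x v
      = u ⬝ᵥ (of fun i j => fderiv ℝ (fun y => a y i j) x v) *ᵥ u := by
  have hd : ∀ i j, DifferentiableAt ℝ (fun y => a y i j) x :=
    fun i j => (ha i j).differentiable two_ne_zero x
  have h : HasFDerivAt (fun y => ∑ i, ∑ j, (u i * u j) • a y i j)
      (∑ i, ∑ j, (u i * u j) • fderiv ℝ (fun y => a y i j) x) x :=
    HasFDerivAt.fun_sum fun i _ => HasFDerivAt.fun_sum fun j _ =>
      (hd i j).hasFDerivAt.const_smul (u i * u j)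
  simp only [dotProduct_mulVec_self_eq_sum, h.fderiv]
  simp

theorem norm_iteratedFDeriv_two_dotProduct_mulVec_self_le {L : ℝ}
    (hL : ∀ x i j, ‖iteratedFDeriv ℝ 2 (fun y => a y i j) x‖ ≤ L) (x : E) :
    ‖iteratedFDeriv ℝ 2 (fun y => u ⬝ᵥ a y *ᵥ u) x‖ ≤ (∑ i, |u i|) ^ 2 * L := by
  simp only [dotProduct_mulVec_self_eq_sum]
  have hterm : ∀ i j,
      ‖iteratedFDeriv ℝ 2 (fun y => (u i * u j) • a y i j) x‖ ≤ |u i| * |u j| * L := fun i j => by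
    rw [iteratedFDeriv_const_smul_apply' (ha i j).contDiffAt, norm_smul, Real.norm_eq_abs,
      abs_mul]
    exact mul_le_mul_of_nonneg_left (hL x i j) (by positivity)
  calc ‖iteratedFDeriv ℝ 2 (fun y => ∑ i, ∑ j, (u i * u j) • a y i j) x‖
      ≤ ∑ i, ∑ j, ‖iteratedFDeriv ℝ 2 (fun y => (u i * u j) • a y i j) x‖ := by
        rw [iteratedFDeriv_fun_sum_apply fun i _ => by fun_prop]
        refine (norm_sum_le _ _).trans (Finset.sum_le_sum fun i _ => ?_)
        rw [iteratedFDeriv_fun_sum_apply (f := fun j y => (u i * u j) • a y i j)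
          fun j _ => by fun_prop]
        exact norm_sum_le _ _
    _ ≤ ∑ i, ∑ j, |u i| * |u j| * L := by gcongr with i _ j _; exact hterm i j
    _ = (∑ i, |u i|) ^ 2 * L := by
        rw [sq, Finset.sum_mul_sum, Finset.sum_mul]; simp_rw [Finset.sum_mul]

theorem sq_dotProduct_fderiv_mulVec_le {L : ℝ} (hpsd : ∀ x, (a x).PosSemidef)
    (hL : ∀ x i j, ‖iteratedFDeriv ℝ 2 (fun y => a y i j) x‖ ≤ L) (x v : E) :
    (u ⬝ᵥ (of fun i j => fderiv ℝ (fun y => a y i j) x v) *ᵥ u) ^ 2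
      ≤ 4 * ((∑ i, |u i|) ^ 2 * L * ‖v‖ ^ 2) * (u ⬝ᵥ a x *ᵥ u) := by
  rw [← fderiv_dotProduct_mulVec_self_apply ha]
  exact sq_fderiv_apply_le_of_nonneg (contDiff_dotProduct_mulVec_self ha u)
    (fun y => by simpa using (hpsd y).dotProduct_mulVec_nonneg u)
    (norm_iteratedFDeriv_two_dotProduct_mulVec_self_le ha u hL) x v

end QuadraticForm

section Trace

theorem Matrix.trace_eq_sum_dotProduct_mulVec {𝕜 n ι : Type*} [RCLike 𝕜] [Fintype n]
    [DecidableEq n] [Fintype ι] (X : Matrix n n 𝕜)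
    (b : OrthonormalBasis ι 𝕜 (EuclideanSpace 𝕜 n)) :
    X.trace = ∑ k, star ⇑(b k) ⬝ᵥ X *ᵥ ⇑(b k) := by
  have h : LinearMap.trace 𝕜 _ (toLpLin 2 2 X) = X.trace := by
    rw [LinearMap.trace_eq_matrix_trace 𝕜 (PiLp.basisFun 2 𝕜 n), toLpLin_eq_toLin,
      LinearMap.toMatrix_toLin]
  rw [← h, LinearMap.trace_eq_sum_inner _ b]
  refine Finset.sum_congr rfl fun k _ => ?_
  rw [EuclideanSpace.inner_eq_star_dotProduct, dotProduct_comm]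
  rfl

variable {n : Type*} [Fintype n] {A B V : Matrix n n ℝ}

theorem Matrix.IsSymm.trace_mul_eq_sum_sum (hV : V.IsSymm) :
    (B * V).trace = ∑ i, ∑ j, B i j * V i j := by
  simp [trace, mul_apply, hV.apply]

theorem Matrix.IsSymm.trace_mul_mul_eq_sum_sum_sum (hV : V.IsSymm) :
    (V * A * V).trace = ∑ i, ∑ j, ∑ m, A i j * V i m * V j m := by
  rw [trace_mul_comm, ← Matrix.mul_assoc, trace_mul_comm]
  simp only [trace, diag, mul_apply, Finset.mul_sum]
  refine Finset.sum_congr rfl fun i _ => Finset.sum_congr rfl fun j _ =>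
    Finset.sum_congr rfl fun m _ => ?_
  rw [hV.apply m i]; ring

theorem sq_trace_mul_le_of_sq_dotProduct_mulVec_le [DecidableEq n] (hV : V.IsSymm) {K : ℝ}
    (hAB : ∀ u : n → ℝ, (u ⬝ᵥ B *ᵥ u) ^ 2 ≤ K * (u ⬝ᵥ u) * (u ⬝ᵥ A *ᵥ u)) :
    (B * V).trace ^ 2 ≤ Fintype.card n * K * (V * A * V).trace := by
  have hH : V.IsHermitian := isHermitian_iff_isSymm.mpr hV
  set b := hH.eigenvectorBasis
  set μ := hH.eigenvalues
  have hb : ∀ k, ⇑(b k) ⬝ᵥ ⇑(b k) = 1 := fun k => by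
    have := inner_self_eq_one_of_norm_eq_one (𝕜 := ℝ) (b.orthonormal.1 k)
    rwa [EuclideanSpace.inner_eq_star_dotProduct, star_trivial] at this
  have hVb : ∀ k, V *ᵥ ⇑(b k) = μ k • ⇑(b k) := hH.mulVec_eigenvectorBasis
  have hBV : (B * V).trace = ∑ k, μ k * (⇑(b k) ⬝ᵥ B *ᵥ ⇑(b k)) := by
    simp [trace_eq_sum_dotProduct_mulVec _ b, ← mulVec_mulVec, hVb, mulVec_smul]
  have hVAV : (V * A * V).trace = ∑ k, μ k ^ 2 * (⇑(b k) ⬝ᵥ A *ᵥ ⇑(b k)) := by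
    refine (trace_eq_sum_dotProduct_mulVec _ b).trans (Finset.sum_congr rfl fun k _ => ?_)
    rw [star_trivial, ← mulVec_mulVec, ← mulVec_mulVec, dotProduct_mulVec, ← mulVec_transpose,
      hV.eq, hVb, mulVec_smul, smul_dotProduct, dotProduct_smul, smul_eq_mul, smul_eq_mul]
    ring
  calc (B * V).trace ^ 2
      ≤ Fintype.card n * ∑ k, (μ k * (⇑(b k) ⬝ᵥ B *ᵥ ⇑(b k))) ^ 2 := by
        rw [hBV]; exact sq_sum_le_card_mul_sum_sq
    _ ≤ Fintype.card n * ∑ k, μ k ^ 2 * (K * (⇑(b k) ⬝ᵥ A *ᵥ ⇑(b k))) := by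
        gcongr with k
        simpa [mul_pow, hb] using mul_le_mul_of_nonneg_left (hAB (b k)) (sq_nonneg (μ k))
    _ = Fintype.card n * K * (V * A * V).trace := by
        rw [hVAV, Finset.mul_sum, Finset.mul_sum]
        exact Finset.sum_congr rfl fun k _ => by ring

end Trace

/-- Oleinik–Radkevich type estimate: if `a` takes values in symmetric nonnegative-definite
matrices with second-order derivatives bounded by `L`, then
`|D_l a^{ij} V^{ij}|² ≤ N a^{ij} V^{ik} V^{jk}` for symmetric `V`, with `N = N(L,d)`. -/
theorem oleinik_estimate (d : ℕ) (L : ℝ) (hL : 0 ≤ L) :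
    ∃ N : ℝ, ∀ a : (Fin d → ℝ) → Matrix (Fin d) (Fin d) ℝ,
      (∀ i j, ContDiff ℝ 2 fun x => a x i j) →
      (∀ x, (a x).IsSymm) → (∀ x, (a x).PosSemidef) →
      (∀ x i j, ‖iteratedFDeriv ℝ 2 (fun y => a y i j) x‖ ≤ L) →
      ∀ V : Matrix (Fin d) (Fin d) ℝ, V.IsSymm → ∀ (l : Fin d) (x : Fin d → ℝ),
        (∑ i, ∑ j, fderiv ℝ (fun y => a y i j) x (Pi.single l 1) * V i j) ^ 2
          ≤ N * ∑ i, ∑ j, ∑ m, a x i j * V i m * V j m := by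
  refine ⟨d * (4 * d * L), fun a ha _ hpsd hbd V hV l x => ?_⟩
  have hquad : ∀ u : Fin d → ℝ,
      (u ⬝ᵥ (of fun i j => fderiv ℝ (fun y => a y i j) x (Pi.single l 1)) *ᵥ u) ^ 2
        ≤ 4 * d * L * (u ⬝ᵥ u) * (u ⬝ᵥ a x *ᵥ u) := fun u => by
    have hq : 0 ≤ u ⬝ᵥ a x *ᵥ u := by simpa using (hpsd x).dotProduct_mulVec_nonneg u
    calc _ ≤ 4 * ((∑ i, |u i|) ^ 2 * L * ‖(Pi.single l 1 : Fin d → ℝ)‖ ^ 2) * (u ⬝ᵥ a x *ᵥ u) :=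
          sq_dotProduct_fderiv_mulVec_le ha u hpsd hbd x _
      _ = 4 * ((∑ i, |u i|) ^ 2 * L) * (u ⬝ᵥ a x *ᵥ u) := by
          rw [Pi.norm_single, norm_one, one_pow, mul_one]
      _ ≤ 4 * (d * (u ⬝ᵥ u) * L) * (u ⬝ᵥ a x *ᵥ u) := by
          gcongr
          simpa using sq_sum_abs_le_card_mul_dotProduct_self u
      _ = 4 * d * L * (u ⬝ᵥ u) * (u ⬝ᵥ a x *ᵥ u) := by ring
  have := sq_trace_mul_le_of_sq_dotProduct_mulVec_le hV hquad
  rwa [hV.trace_mul_eq_sum_sum, hV.trace_mul_mul_eq_sum_sum_sum, Fintype.card_fin] at this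
end
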